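/- Let H be a real inner product space and L : H → H a linear map that is symmetric (⟨Lw, v⟩ = ⟨w, Lv⟩ for all w, v) and nonpositive (⟨Lw, w⟩ ≤ 0 for all w). Let τ_1, …, τ_N > 0 be time steps satisfying condition S1, let u^0, u^1 ∈ H be arbitrary, and suppose u^2, …, u^N ∈ H satisfy the BDF2 scheme D_2 u^n = L u^n + f^n only for 2 ≤ n ≤ N (any starting scheme may produce u^1). Then for every 2 ≤ n ≤ N, ‖u^n‖ ≤ ‖u^1‖ + 2·t_n·‖(u^1 − u^0)/τ_1‖ + 2·t_n·max_{2≤j≤n} ‖f^j‖. -/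

import Mathlib

open Finset

/-- BDF2 convolution kernels `b^{(n)}_j` built from the step sizes `τ`. -/
noncomputable def bdf2 (τ : ℕ → ℝ) (n j : ℕ) : ℝ :=
  if n = 1 then (if j = 0 then 1 / τ 1 else 0)
  else if j = 0 then (1 + 2 * (τ n / τ (n - 1))) / (τ n * (1 + τ n / τ (n - 1)))
  else if j = 1 then -(τ n / τ (n - 1)) ^ 2 / (τ n * (1 + τ n / τ (n - 1)))
  else 0

/-- DOC kernels: `doc τ n g = θ^{(n)}_g`, defined by the recursive procedure
`θ^{(n)}_0 = 1/b^{(n)}_0`, `θ^{(n)}_{n-k} = -(1/b^{(k)}_0) ∑_{j=k+1}^n θ^{(n)}_{n-j} b^{(j)}_{j-k}`. -/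
noncomputable def doc (τ : ℕ → ℝ) (n : ℕ) : ℕ → ℝ
  | 0 => 1 / bdf2 τ n 0
  | (g + 1) =>
    -(1 / bdf2 τ (n - (g + 1)) 0) *
      ∑ i ∈ (Finset.range (g + 1)).attach,
        doc τ n i.1 * bdf2 τ (n - i.1) (g + 1 - i.1)
  decreasing_by exact Finset.mem_range.mp i.2

/-- The variable-step BDF2 formula `D_2 v^n = ∑_{k=1}^n b^{(n)}_{n-k} (v^k - v^{k-1})`. -/
noncomputable def D2 {V : Type*} [AddCommGroup V] [Module ℝ V]
    (τ : ℕ → ℝ) (v : ℕ → V) (n : ℕ) : V :=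
  ∑ k ∈ Finset.Icc 1 n, bdf2 τ n (n - k) • (v k - v (k - 1))

/-- Time levels `t_n = τ_1 + ⋯ + τ_n`. -/
noncomputable def tlv (τ : ℕ → ℝ) (n : ℕ) : ℝ := ∑ i ∈ Finset.Icc 1 n, τ i


/-!
Write `∇uⁿ = uⁿ - uⁿ⁻¹`. The BDF2 formula `D₂uⁿ = b₀⁽ⁿ⁾ ∇uⁿ + b₁⁽ⁿ⁾ ∇uⁿ⁻¹` is a lower
bidiagonal system in `∇u` with `b₀ > 0 ≥ b₁`; its inverse has nonnegative entries (the DOC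
kernels) and maps the constant sequence `1` to `τ`. Testing the scheme with `uⁿ` therefore
gives `⟪∇uⁿ, uⁿ⟫ ≤ τₙ (G + F) ‖uⁿ‖ + ⟪L wⁿ, uⁿ⟫`, where `G = ‖(u¹ - u⁰)/τ₁‖`, `F = max ‖fʲ‖`
and `w` solves the same bidiagonal system with data `uʲ` (`j ≥ 2`). Condition S1 is exactly
what makes `2 b₀⁽ⁿ⁾ + b₁⁽ⁿ⁾ ≥ -b₁⁽ⁿ⁺¹⁾`, so that `∑ₙ ⟪-L wⁿ, uⁿ⟫` telescopes into a sum of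
nonnegative quadratic terms. Summing, `‖uᵐ‖² ≤ ‖u¹‖² + 2 ∑ₙ τₙ (G + F) ‖uⁿ‖`, and evaluating
this at an index where `‖uᵏ‖` is maximal yields the bound.
-/

section BidiagSolve

variable {V W : Type*} [AddCommGroup V] [Module ℝ V] [AddCommGroup W] [Module ℝ W]

/-- For `a k = bdf2 τ k 0 ≠ 0` and `b k = bdf2 τ k 1` this applies the DOC kernels:
`bidiagSolve a b g n = ∑ j ∈ Icc 1 n, doc τ n (n - j) • g j`. -/
noncomputable def bidiagSolve (a b : ℕ → ℝ) (g : ℕ → V) : ℕ → V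
  | 0 => 0
  | k + 1 => (a (k + 1))⁻¹ • (g (k + 1) - b (k + 1) • bidiagSolve a b g k)

variable {a b : ℕ → ℝ}

lemma bidiagSolve_recurrence (g : ℕ → V) {k : ℕ} (ha : a (k + 1) ≠ 0) :
    a (k + 1) • bidiagSolve a b g (k + 1) + b (k + 1) • bidiagSolve a b g k = g (k + 1) := by
  rw [bidiagSolve, smul_inv_smul₀ ha, sub_add_cancel]

lemma eq_bidiagSolve_of_recurrence {g z : ℕ → V} {n : ℕ} (hb : b 1 = 0)
    (ha : ∀ k < n, a (k + 1) ≠ 0)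
    (hz : ∀ k < n, a (k + 1) • z (k + 1) + b (k + 1) • z k = g (k + 1)) (hn : 0 < n) :
    z n = bidiagSolve a b g n := by
  obtain ⟨m, rfl⟩ := Nat.exists_eq_add_one_of_ne_zero hn.ne'
  have hprev : b (m + 1) • z m = b (m + 1) • bidiagSolve a b g m := by
    cases m with
    | zero => simp [hb]
    | succ m =>
      rw [eq_bidiagSolve_of_recurrence hb (fun k hk => ha k (by omega))
        (fun k hk => hz k (by omega)) m.succ_pos]
  refine smul_right_injective V (ha m m.lt_add_one) ?_
  dsimp only
  rw [eq_sub_of_add_eq (hz m m.lt_add_one),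
    eq_sub_of_add_eq (bidiagSolve_recurrence g (ha m m.lt_add_one)), hprev]

lemma bidiagSolve_add (g h : ℕ → V) :
    bidiagSolve a b (g + h) = bidiagSolve a b g + bidiagSolve a b h := by
  funext k
  induction k with
  | zero => simp [bidiagSolve]
  | succ k ih =>
    simp only [bidiagSolve, Pi.add_apply]
    rw [ih, Pi.add_apply, ← smul_add]
    congr 1
    rw [smul_add]
    abel

lemma map_bidiagSolve (φ : V →ₗ[ℝ] W) (g : ℕ → V) (k : ℕ) :
    φ (bidiagSolve a b g k) = bidiagSolve a b (φ ∘ g) k := by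
  induction k with
  | zero => simp [bidiagSolve]
  | succ k ih => simp [bidiagSolve, ih]

lemma bidiagSolve_mono {g h : ℕ → ℝ} {n : ℕ} (ha : ∀ k < n, 0 < a (k + 1))
    (hb : ∀ k < n, b (k + 1) ≤ 0) (hgh : ∀ k < n, g (k + 1) ≤ h (k + 1)) :
    bidiagSolve a b g n ≤ bidiagSolve a b h n := by
  induction n with
  | zero => simp [bidiagSolve]
  | succ n ih =>
    have ih' := ih (fun k hk => ha k (by omega)) (fun k hk => hb k (by omega))
      (fun k hk => hgh k (by omega))
    simp only [bidiagSolve, smul_eq_mul]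
    refine mul_le_mul_of_nonneg_left ?_ (inv_nonneg.2 (ha n n.lt_add_one).le)
    nlinarith [hb n n.lt_add_one, hgh n n.lt_add_one]

lemma bidiagSolve_const {t : ℕ → ℝ} {n : ℕ} (c : ℝ) (hb : b 1 = 0)
    (ha : ∀ k < n, a (k + 1) ≠ 0) (ht : ∀ k < n, a (k + 1) * t (k + 1) + b (k + 1) * t k = 1)
    (hn : 0 < n) : bidiagSolve a b (fun _ => c) n = c * t n := by
  refine (eq_bidiagSolve_of_recurrence (g := fun _ => c) (z := fun k => c * t k) hb ha
    (fun k hk => ?_) hn).symm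
  simp only [smul_eq_mul]
  linear_combination c * ht k hk

end BidiagSolve

lemma sum_Icc_two_sub {G : Type*} [AddCommGroup G] (F : ℕ → G) {m : ℕ} (hm : 1 ≤ m) :
    ∑ n ∈ Icc 2 m, (F n - F (n - 1)) = F m - F 1 := by
  induction m, hm using Nat.le_induction with
  | base => simp
  | succ m hm ih =>
    rw [Finset.sum_Icc_succ_top (by omega), ih, Nat.add_sub_cancel]
    abel

lemma le_add_two_sum_of_sq_le {x c : ℕ → ℝ} {m : ℕ} (hm : 1 ≤ m) (hx : ∀ k, 0 ≤ x k)
    (hc : ∀ n ∈ Icc 2 m, 0 ≤ c n)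
    (h : ∀ k ∈ Icc 2 m, x k ^ 2 ≤ x 1 ^ 2 + 2 * ∑ n ∈ Icc 2 k, c n * x n) :
    x m ≤ x 1 + 2 * ∑ n ∈ Icc 2 m, c n := by
  obtain ⟨k, hk, hmax⟩ := exists_max_image (Icc 1 m) x ⟨1, mem_Icc.2 ⟨le_rfl, hm⟩⟩
  rw [mem_Icc] at hk
  have hC : 0 ≤ ∑ n ∈ Icc 2 m, c n := sum_nonneg hc
  suffices x k ≤ x 1 + 2 * ∑ n ∈ Icc 2 m, c n from
    (hmax m (mem_Icc.2 ⟨hm, le_rfl⟩)).trans this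
  rcases hk.1.eq_or_lt with rfl | hk2
  · linarith
  have hsub : Icc 2 k ⊆ Icc 2 m := Icc_subset_Icc_right hk.2
  have hsum : ∑ n ∈ Icc 2 k, c n * x n ≤ (∑ n ∈ Icc 2 m, c n) * x k := by
    calc ∑ n ∈ Icc 2 k, c n * x n ≤ ∑ n ∈ Icc 2 k, c n * x k := by
          refine sum_le_sum fun n hn => mul_le_mul_of_nonneg_left ?_ (hc n (hsub hn))
          exact hmax n (by simp only [mem_Icc] at hn ⊢; omega)
      _ ≤ _ := by
          rw [← sum_mul]
          exact mul_le_mul_of_nonneg_right (sum_le_sum_of_subset_of_nonneg hsub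
            fun n hn _ => hc n hn) (hx k)
  have h1 : x 1 ≤ x k := hmax 1 (mem_Icc.2 ⟨le_rfl, hm⟩)
  nlinarith [h k (mem_Icc.2 ⟨hk2, hk.2⟩), hx 1, hx k]

/-- `(3 + √17) / 2` is the positive root of `R ^ 2 = 3 * R + 2`; at `r = s = (3 + √17) / 2` this
is an equality. -/
lemma mul_one_add_le_of_le_bdf2_bound {r s : ℝ} (hr : 0 ≤ r) (hrR : r ≤ (3 + √17) / 2)
    (hs : 0 ≤ s) (hsR : s ≤ (3 + √17) / 2) : s * (1 + r) ≤ (2 + 4 * r - r ^ 2) * (1 + s) := by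
  have h17 : √17 ^ 2 = 17 := Real.sq_sqrt (by norm_num)
  have h4 : 4 ≤ √17 := Real.le_sqrt_of_sq_le (by norm_num)
  nlinarith [mul_nonneg (sub_nonneg.2 hrR) hr, mul_nonneg (sub_nonneg.2 hsR) hr,
    mul_nonneg (mul_nonneg (sub_nonneg.2 hrR) hr) hs, mul_nonneg (sub_nonneg.2 hrR) hs]

section Kernels

variable {τ : ℕ → ℝ}

lemma bdf2_one_zero : bdf2 τ 1 0 = (τ 1)⁻¹ := by simp [bdf2]

lemma bdf2_one_one : bdf2 τ 1 1 = 0 := by simp [bdf2]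

lemma bdf2_of_two_le {n j : ℕ} (hj : 2 ≤ j) : bdf2 τ n j = 0 := by
  simp [bdf2, show j ≠ 0 by omega, show j ≠ 1 by omega]

lemma D2_succ {V : Type*} [AddCommGroup V] [Module ℝ V] (v : ℕ → V) (k : ℕ) :
    D2 τ v (k + 1) =
      bdf2 τ (k + 1) 0 • (v (k + 1) - v k) + bdf2 τ (k + 1) 1 • (v k - v (k - 1)) := by
  rw [D2, sum_eq_add (k + 1) k (by omega)]
  · simp
  · intro j hj hjk
    rw [mem_Icc] at hj
    rw [bdf2_of_two_le (by omega), zero_smul]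
  · simp
  · intro hk
    obtain rfl : k = 0 := by simpa using hk
    simp [bdf2_one_one]

lemma D2_one {V : Type*} [AddCommGroup V] [Module ℝ V] (v : ℕ → V) :
    D2 τ v 1 = (τ 1)⁻¹ • (v 1 - v 0) := by
  simp [D2_succ v 0, bdf2_one_zero, bdf2_one_one]

end Kernels

section Coefficients

variable {τ : ℕ → ℝ} {n : ℕ}

lemma bdf2_zero_pos (hn : 1 ≤ n) (hτ : ∀ k, 1 ≤ k → k ≤ n → 0 < τ k) : 0 < bdf2 τ n 0 := by
  rcases hn.eq_or_lt with rfl | hn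
  · simpa [bdf2_one_zero] using hτ 1 le_rfl le_rfl
  · have := hτ n (by omega) le_rfl
    have := hτ (n - 1) (by omega) (by omega)
    simp only [bdf2, show n ≠ 1 by omega, if_false, if_true]
    positivity

lemma bdf2_one_nonpos (hn : 1 ≤ n) (hτ : ∀ k, 1 ≤ k → k ≤ n → 0 < τ k) : bdf2 τ n 1 ≤ 0 := by
  rcases hn.eq_or_lt with rfl | hn
  · rw [bdf2_one_one]
  · have := hτ n (by omega) le_rfl
    have := hτ (n - 1) (by omega) (by omega)
    simp only [bdf2, show n ≠ 1 by omega, if_false, if_true, one_ne_zero]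
    exact div_nonpos_of_nonpos_of_nonneg (neg_nonpos.2 (sq_nonneg _)) (by positivity)

lemma bdf2_zero_mul_add_bdf2_one_mul (hn : 1 ≤ n) (hτ : ∀ k, 1 ≤ k → k ≤ n → 0 < τ k) :
    bdf2 τ n 0 * τ n + bdf2 τ n 1 * τ (n - 1) = 1 := by
  rcases hn.eq_or_lt with rfl | hn
  · simp [bdf2_one_zero, bdf2_one_one, (hτ 1 le_rfl le_rfl).ne']
  · have := hτ n (by omega) le_rfl
    have := hτ (n - 1) (by omega) (by omega)
    simp only [bdf2, show n ≠ 1 by omega, if_false, if_true, one_ne_zero]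
    field_simp
    ring

lemma div_le_two_mul_bdf2_zero_add_bdf2_one (hn : 2 ≤ n) (hτn : 0 < τ n)
    (hτn' : 0 < τ (n - 1)) (hr : τ n / τ (n - 1) ≤ (3 + √17) / 2) {s : ℝ} (hs : 0 ≤ s)
    (hsR : s ≤ (3 + √17) / 2) : s / ((1 + s) * τ n) ≤ 2 * bdf2 τ n 0 + bdf2 τ n 1 := by
  set r := τ n / τ (n - 1) with hr_def
  have hr0 : 0 < r := div_pos hτn hτn'
  have hkernel : 2 * bdf2 τ n 0 + bdf2 τ n 1 = (2 + 4 * r - r ^ 2) / ((1 + r) * τ n) := by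
    simp only [bdf2, show n ≠ 1 by omega, if_false, if_true, one_ne_zero, ← hr_def]
    field_simp
    ring
  rw [hkernel, div_le_div_iff₀ (by positivity) (by positivity)]
  nlinarith [mul_le_mul_of_nonneg_right (mul_one_add_le_of_le_bdf2_bound hr0.le hr hs hsR) hτn.le]

lemma neg_bdf2_succ_one_le (hn : 2 ≤ n) (hτn : 0 < τ n) (hτn' : 0 < τ (n - 1))
    (hτn'' : 0 < τ (n + 1)) (hr : τ n / τ (n - 1) ≤ (3 + √17) / 2)
    (hr' : τ (n + 1) / τ n ≤ (3 + √17) / 2) :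
    -bdf2 τ (n + 1) 1 ≤ 2 * bdf2 τ n 0 + bdf2 τ n 1 := by
  have hr0 : 0 < τ (n + 1) / τ n := div_pos hτn'' hτn
  convert div_le_two_mul_bdf2_zero_add_bdf2_one hn hτn hτn' hr hr0.le hr' using 1
  simp only [bdf2, show n + 1 ≠ 1 by omega, if_false, if_true, one_ne_zero, Nat.add_sub_cancel]
  field_simp

lemma two_mul_bdf2_zero_add_bdf2_one_nonneg (hn : 2 ≤ n) (hτn : 0 < τ n)
    (hτn' : 0 < τ (n - 1)) (hr : τ n / τ (n - 1) ≤ (3 + √17) / 2) :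
    0 ≤ 2 * bdf2 τ n 0 + bdf2 τ n 1 := by
  simpa using div_le_two_mul_bdf2_zero_add_bdf2_one hn hτn hτn' hr le_rfl (by positivity)

end Coefficients

section PositiveOperator

open scoped RealInnerProductSpace

variable {H : Type*} [NormedAddCommGroup H] [InnerProductSpace ℝ H] {P : H →ₗ[ℝ] H}

lemma inner_map_sub_sub_of_isSymmetric (hP : P.IsSymmetric) (x y : H) :
    ⟪P (x - y), x - y⟫ = ⟪P x, x⟫ - 2 * ⟪P x, y⟫ + ⟪P y, y⟫ := by
  have : ⟪P y, x⟫ = ⟪P x, y⟫ := by rw [hP y x, real_inner_comm]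
  simp only [map_sub, inner_sub_left, inner_sub_right]
  linarith

lemma le_two_sum_inner_map_bidiag (hP : P.IsPositive) {a b : ℕ → ℝ} {w : ℕ → H} {m : ℕ}
    (hm : 1 ≤ m) (hw : w 1 = 0) (hb : ∀ n ∈ Icc 2 m, b n ≤ 0)
    (hab : ∀ n ∈ Ico 2 m, -b (n + 1) ≤ 2 * a n + b n) :
    (2 * a m + b m) * ⟪P (w m), w m⟫ ≤
      2 * ∑ n ∈ Icc 2 m, ⟪P (w n), a n • w n + b n • w (n - 1)⟫ := by
  have hpos : ∀ x, 0 ≤ ⟪P x, x⟫ := fun x => by simpa using hP.re_inner_nonneg_left x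
  induction m, hm using Nat.le_induction with
  | base => simp [hw]
  | succ m hm ih =>
    have hprev : -b (m + 1) * ⟪P (w m), w m⟫ ≤
        2 * ∑ n ∈ Icc 2 m, ⟪P (w n), a n • w n + b n • w (n - 1)⟫ := by
      rcases hm.eq_or_lt with rfl | hm
      · simp [hw]
      · calc -b (m + 1) * ⟪P (w m), w m⟫ ≤ (2 * a m + b m) * ⟪P (w m), w m⟫ :=
              mul_le_mul_of_nonneg_right (hab m (mem_Ico.2 ⟨hm, m.lt_add_one⟩)) (hpos _)
          _ ≤ _ := ih (fun n hn => hb n (Icc_subset_Icc_right m.le_succ hn))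
              (fun n hn => hab n (Ico_subset_Ico_right m.le_succ hn))
    have hb' : b (m + 1) ≤ 0 := hb (m + 1) (mem_Icc.2 ⟨by omega, le_rfl⟩)
    have hdiff := hpos (w m - w (m + 1))
    have hsymm : ⟪P (w m), w (m + 1)⟫ = ⟪P (w (m + 1)), w m⟫ := by
      rw [hP.1 (w m), real_inner_comm]
    rw [inner_map_sub_sub_of_isSymmetric hP.1, hsymm] at hdiff
    rw [sum_Icc_succ_top (by omega), inner_add_right, real_inner_smul_right,
      real_inner_smul_right, Nat.add_sub_cancel]
    -- the gap between the two sides is `-b (m + 1) * ⟪P (w m - w (m + 1)), w m - w (m + 1)⟫`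
    nlinarith [mul_nonneg (neg_nonneg.2 hb') hdiff]

end PositiveOperator

section Energy

open scoped RealInnerProductSpace

variable {τ : ℕ → ℝ}

lemma sub_pred_eq_bidiagSolve_D2 {V : Type*} [AddCommGroup V] [Module ℝ V] (v : ℕ → V) {n : ℕ}
    (hn : 1 ≤ n) (hτ : ∀ k, 1 ≤ k → k ≤ n → 0 < τ k) :
    v n - v (n - 1) = bidiagSolve (bdf2 τ · 0) (bdf2 τ · 1) (D2 τ v) n := by
  refine eq_bidiagSolve_of_recurrence (a := (bdf2 τ · 0)) (b := (bdf2 τ · 1))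
    (z := fun k => v k - v (k - 1)) bdf2_one_one
    (fun k hk => (bdf2_zero_pos (by omega) fun i h1 h2 => hτ i h1 (by omega)).ne')
    (fun k _ => ?_) hn
  rw [D2_succ, Nat.add_sub_cancel]

variable {H : Type*} [NormedAddCommGroup H] [InnerProductSpace ℝ H] (L : H →ₗ[ℝ] H)
  (u f : ℕ → H)

lemma inner_sub_pred_le_of_bdf2 {n : ℕ} {E : ℝ} (hn : 1 ≤ n) (hτ : ∀ k, 1 ≤ k → k ≤ n → 0 < τ k)
    (hscheme : ∀ j, 2 ≤ j → j ≤ n → D2 τ u j = L (u j) + f j)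
    (hE1 : ‖(τ 1)⁻¹ • (u 1 - u 0)‖ ≤ E) (hEf : ∀ j ∈ Icc 2 n, ‖f j‖ ≤ E) :
    ⟪u n - u (n - 1), u n⟫ ≤ τ n * E * ‖u n‖ +
      ⟪L (bidiagSolve (bdf2 τ · 0) (bdf2 τ · 1) (fun j => if 2 ≤ j then u j else 0) n), u n⟫ := by
  set ū : ℕ → H := fun j => if 2 ≤ j then u j else 0
  -- `e 1 = (u 1 - u 0) / τ 1` and `e j = f j` for `j ≥ 2`
  set e : ℕ → H := fun j => D2 τ u j - L (ū j)
  have ha : ∀ k < n, 0 < bdf2 τ (k + 1) 0 := fun k hk =>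
    bdf2_zero_pos (by omega) fun i h1 h2 => hτ i h1 (by omega)
  have he : ∀ k < n, ‖e (k + 1)‖ ≤ E := by
    intro k hk
    rcases Nat.eq_zero_or_pos k with rfl | hk0
    · simpa [e, ū, D2_one] using hE1
    · have h2 : 2 ≤ k + 1 := by omega
      simpa [e, ū, h2, hscheme (k + 1) h2 (by omega)] using hEf (k + 1) (mem_Icc.2 ⟨h2, hk⟩)
  have hsplit : D2 τ u = L ∘ ū + e := by
    funext j
    simp [e]
  have hinner : ⟪bidiagSolve (bdf2 τ · 0) (bdf2 τ · 1) e n, u n⟫ =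
      bidiagSolve (bdf2 τ · 0) (bdf2 τ · 1) (fun j => ⟪u n, e j⟫) n := by
    rw [real_inner_comm, ← innerₛₗ_apply_apply, map_bidiagSolve]
    rfl
  have hmono : bidiagSolve (bdf2 τ · 0) (bdf2 τ · 1) (fun j => ⟪u n, e j⟫) n ≤
      bidiagSolve (bdf2 τ · 0) (bdf2 τ · 1) (fun _ => ‖u n‖ * E) n := by
    refine bidiagSolve_mono ha
      (fun k hk => bdf2_one_nonpos (by omega) fun i h1 h2 => hτ i h1 (by omega))
      (fun k hk => (real_inner_le_norm _ _).trans ?_)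
    exact mul_le_mul_of_nonneg_left (he k hk) (norm_nonneg _)
  rw [bidiagSolve_const (a := (bdf2 τ · 0)) (b := (bdf2 τ · 1)) _ bdf2_one_one
    (fun k hk => (ha k hk).ne')
    (fun k hk => bdf2_zero_mul_add_bdf2_one_mul (by omega) fun i h1 h2 => hτ i h1 (by omega))
    hn] at hmono
  rw [sub_pred_eq_bidiagSolve_D2 u hn hτ, hsplit, bidiagSolve_add, Pi.add_apply,
    ← map_bidiagSolve, inner_add_left, hinner]
  linarith

lemma sum_inner_bidiagSolve_bdf2_nonpos (hL : (-L).IsPositive) {m : ℕ} (hm : 2 ≤ m)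
    (hτ : ∀ k, 1 ≤ k → k ≤ m → 0 < τ k)
    (hS1 : ∀ k, 2 ≤ k → k ≤ m → τ k / τ (k - 1) ≤ (3 + √17) / 2) :
    ∑ n ∈ Icc 2 m,
      ⟪L (bidiagSolve (bdf2 τ · 0) (bdf2 τ · 1) (fun j => if 2 ≤ j then u j else 0) n), u n⟫
      ≤ 0 := by
  set w := bidiagSolve (bdf2 τ · 0) (bdf2 τ · 1) (fun j => if 2 ≤ j then u j else 0)
  have hu : ∀ n ∈ Icc 2 m, u n = bdf2 τ n 0 • w n + bdf2 τ n 1 • w (n - 1) := by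
    intro n hn
    rw [mem_Icc] at hn
    obtain ⟨k, rfl⟩ : ∃ k, n = k + 1 := ⟨n - 1, by omega⟩
    rw [Nat.add_sub_cancel, bidiagSolve_recurrence (a := (bdf2 τ · 0)) (b := (bdf2 τ · 1)) _
      (bdf2_zero_pos (by omega) fun i h1 h2 => hτ i h1 (by omega)).ne', if_pos hn.1]
  have hw1 : w 1 = 0 := by simp [w, bidiagSolve]
  have henergy := le_two_sum_inner_map_bidiag (a := (bdf2 τ · 0)) (b := (bdf2 τ · 1)) hL
    (by omega : 1 ≤ m) hw1
    (fun n hn => by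
      rw [mem_Icc] at hn
      exact bdf2_one_nonpos (by omega) fun i h1 h2 => hτ i h1 (h2.trans hn.2))
    (fun n hn => by
      rw [mem_Ico] at hn
      exact neg_bdf2_succ_one_le hn.1 (hτ n (by omega) hn.2.le) (hτ (n - 1) (by omega) (by omega))
        (hτ (n + 1) (by omega) hn.2) (hS1 n hn.1 hn.2.le)
        (by simpa using hS1 (n + 1) (by omega) hn.2))
  have hcoef := two_mul_bdf2_zero_add_bdf2_one_nonneg hm (hτ m (by omega) le_rfl)
    (hτ (m - 1) (by omega) (by omega)) (hS1 m hm le_rfl)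
  have hq : 0 ≤ ⟪(-L) (w m), w m⟫ := by simpa using hL.re_inner_nonneg_left (w m)
  have hneg : ∑ n ∈ Icc 2 m, ⟪L (w n), u n⟫ =
      -∑ n ∈ Icc 2 m, ⟪(-L) (w n), bdf2 τ n 0 • w n + bdf2 τ n 1 • w (n - 1)⟫ := by
    rw [← sum_neg_distrib]
    refine sum_congr rfl fun n hn => ?_
    rw [← hu n hn, LinearMap.neg_apply, inner_neg_left, neg_neg]
  rw [hneg]
  nlinarith [mul_nonneg hcoef hq]

lemma norm_sq_le_add_sum_of_bdf2 (hL : (-L).IsPositive) {m : ℕ} {E : ℝ} (hm : 2 ≤ m)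
    (hτ : ∀ k, 1 ≤ k → k ≤ m → 0 < τ k)
    (hS1 : ∀ k, 2 ≤ k → k ≤ m → τ k / τ (k - 1) ≤ (3 + √17) / 2)
    (hscheme : ∀ j, 2 ≤ j → j ≤ m → D2 τ u j = L (u j) + f j)
    (hE1 : ‖(τ 1)⁻¹ • (u 1 - u 0)‖ ≤ E) (hEf : ∀ j ∈ Icc 2 m, ‖f j‖ ≤ E) :
    ‖u m‖ ^ 2 ≤ ‖u 1‖ ^ 2 + 2 * ∑ n ∈ Icc 2 m, τ n * E * ‖u n‖ := by
  set w := bidiagSolve (bdf2 τ · 0) (bdf2 τ · 1) (fun j => if 2 ≤ j then u j else 0)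
  have hstep : ∀ n ∈ Icc 2 m,
      ‖u n‖ ^ 2 - ‖u (n - 1)‖ ^ 2 ≤ 2 * (τ n * E * ‖u n‖ + ⟪L (w n), u n⟫) := by
    intro n hn
    rw [mem_Icc] at hn
    have hinner := inner_sub_pred_le_of_bdf2 L u f (by omega)
      (fun k h1 h2 => hτ k h1 (h2.trans hn.2))
      (fun j h1 h2 => hscheme j h1 (h2.trans hn.2)) hE1
      (fun j hj => hEf j (Icc_subset_Icc_right hn.2 hj))
    have hsq : ‖u n‖ ^ 2 - ‖u (n - 1)‖ ^ 2 ≤ 2 * ⟪u n - u (n - 1), u n⟫ := by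
      rw [inner_sub_left, real_inner_self_eq_norm_sq, real_inner_comm]
      nlinarith [norm_sub_sq_real (u n) (u (n - 1)), sq_nonneg ‖u n - u (n - 1)‖]
    linarith
  have hsum := sum_le_sum hstep
  rw [sum_Icc_two_sub (‖u ·‖ ^ 2) (by omega), ← mul_sum, sum_add_distrib] at hsum
  linarith [sum_inner_bidiagSolve_bdf2_nonpos L u hL hm hτ hS1]

end Energy

/-- `L²` norm stability with an arbitrary starting scheme for `u¹`. -/
theorem bdf2_L2_stability_any_start
    {H : Type*} [NormedAddCommGroup H] [InnerProductSpace ℝ H]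
    (L : H →ₗ[ℝ] H)
    (hsym : ∀ w v : H, (inner ℝ (L w) v : ℝ) = inner ℝ w (L v))
    (hneg : ∀ w : H, (inner ℝ (L w) w : ℝ) ≤ 0)
    (N : ℕ) (τ : ℕ → ℝ)
    (hτ : ∀ k, 1 ≤ k → k ≤ N → 0 < τ k)
    (hS1 : ∀ k, 2 ≤ k → k ≤ N →
      0 < τ k / τ (k - 1) ∧ τ k / τ (k - 1) ≤ (3 + Real.sqrt 17) / 2)
    (u f : ℕ → H)
    (hscheme : ∀ n, 2 ≤ n → n ≤ N → D2 τ u n = L (u n) + f n) :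
    ∀ n (hn : 2 ≤ n), n ≤ N →
      ‖u n‖ ≤ ‖u 1‖ + 2 * tlv τ n * ‖(τ 1)⁻¹ • (u 1 - u 0)‖ +
        2 * tlv τ n *
          (Finset.Icc 2 n).sup' (Finset.nonempty_Icc.mpr hn) (fun j => ‖f j‖) := by
  intro n hn hnN
  have hL : (-L).IsPositive :=
    ⟨fun x y => by simp [hsym x y], fun x => by simpa using hneg x⟩
  set G := ‖(τ 1)⁻¹ • (u 1 - u 0)‖
  set F := (Finset.Icc 2 n).sup' (Finset.nonempty_Icc.mpr hn) (fun j => ‖f j‖)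
  have hF : ∀ j ∈ Icc 2 n, ‖f j‖ ≤ F := fun j hj => le_sup' (fun j => ‖f j‖) hj
  have hG0 : 0 ≤ G := norm_nonneg _
  have hF0 : 0 ≤ F := (norm_nonneg _).trans (hF n (by simp [hn]))
  have hτn : ∀ k, 1 ≤ k → k ≤ n → 0 < τ k := fun k h1 h2 => hτ k h1 (h2.trans hnN)
  have henergy : ∀ k ∈ Icc 2 n,
      ‖u k‖ ^ 2 ≤ ‖u 1‖ ^ 2 + 2 * ∑ i ∈ Icc 2 k, τ i * (G + F) * ‖u i‖ := by
    intro k hk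
    rw [mem_Icc] at hk
    exact norm_sq_le_add_sum_of_bdf2 L u f hL hk.1 (fun i h1 h2 => hτn i h1 (h2.trans hk.2))
      (fun i h1 h2 => (hS1 i h1 (h2.trans (hk.2.trans hnN))).2)
      (fun j h1 h2 => hscheme j h1 (h2.trans (hk.2.trans hnN))) (by linarith)
      fun j hj => (hF j (Icc_subset_Icc_right hk.2 hj)).trans (by linarith)
  have hsum_τ : ∑ i ∈ Icc 2 n, τ i ≤ tlv τ n :=
    sum_le_sum_of_subset_of_nonneg (Icc_subset_Icc_left one_le_two)
      fun i hi _ => (hτn i (mem_Icc.1 hi).1 (mem_Icc.1 hi).2).le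
  calc ‖u n‖ ≤ ‖u 1‖ + 2 * ∑ i ∈ Icc 2 n, τ i * (G + F) :=
        le_add_two_sum_of_sq_le (by omega) (fun _ => norm_nonneg _)
          (fun i hi => mul_nonneg (hτn i (by simp only [mem_Icc] at hi; omega)
            (mem_Icc.1 hi).2).le (by positivity)) henergy
    _ ≤ ‖u 1‖ + 2 * tlv τ n * (G + F) := by
        rw [← sum_mul, mul_assoc]
        gcongr
    _ = ‖u 1‖ + 2 * tlv τ n * G + 2 * tlv τ n * F := by ring
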